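/- arXiv:1708.04775 — 3 statements merged into one kernel-verified Lean document; each statement's English description precedes it below -/
import Mathlib

section
/- For a metric connection ∇̄ with parallel skew-symmetric torsion, the curvature tensor satisfies the pair-exchange symmetry R(X,Y,Z,W) = R(Z,W,X,Y) for all tangent vectors X, Y, Z, W. -/
/- Abstract model: `L` plays the role of the Lie algebra of vector fields Γ(TM)
   on a Riemannian manifold (M,g), `A` the algebra of smooth functions C^∞(M),
   `act` the action of vector fields on functions (a Lie algebra action by
   derivations of the metric pairing), `g` the Riemannian metric and `cn` a
   metric connection ∇̄ with parallel skew-symmetric torsion. -/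

variable {L : Type*} [LieRing L] [LieAlgebra ℝ L]

/-- The torsion tensor T(X,Y) = ∇̄_X Y − ∇̄_Y X − [X,Y] of a connection. -/
def torsion (cn : L →ₗ[ℝ] L →ₗ[ℝ] L) (X Y : L) : L :=
  cn X Y - cn Y X - ⁅X, Y⁆

/-- The curvature tensor R_{X,Y}Z = ∇̄_X∇̄_Y Z − ∇̄_Y∇̄_X Z − ∇̄_{[X,Y]}Z. -/
def curvT (cn : L →ₗ[ℝ] L →ₗ[ℝ] L) (X Y Z : L) : L :=
  cn X (cn Y Z) - cn Y (cn X Z) - cn ⁅X, Y⁆ Z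

lemma curv_half_aux {A : Type*} [AddCommGroup A] [Module ℝ A] {x y : A}
    (h : x + x = y + y) : x = y := by
  have h2 : (2:ℝ) • x = (2:ℝ) • y := by rw [two_smul, two_smul]; exact h
  calc x = (2:ℝ)⁻¹ • ((2:ℝ) • x) := (inv_smul_smul₀ two_ne_zero x).symm
    _ = (2:ℝ)⁻¹ • ((2:ℝ) • y) := by rw [h2]
    _ = y := inv_smul_smul₀ two_ne_zero y

/-- pair-exchange symmetry: for a metric connection ∇̄ with
parallel skew-symmetric torsion the curvature tensor R(X,Y,Z,W) := g(R_{X,Y}Z,W)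
satisfies R(X,Y,Z,W) = R(Z,W,X,Y). -/
theorem curvature_pair_symmetry
    {A : Type*} [CommRing A] [Algebra ℝ A]
    (act : L → A → A) (g : L →ₗ[ℝ] L →ₗ[ℝ] A)
    (hgsym : ∀ X Y : L, g X Y = g Y X)
    -- vector fields act on functions as a Lie algebra:
    (hact : ∀ (X Y : L) (f : A), act ⁅X, Y⁆ f = act X (act Y f) - act Y (act X f))
    (cn : L →ₗ[ℝ] L →ₗ[ℝ] L)
    (hmetric : ∀ X Y Z : L, act X (g Y Z) = g (cn X Y) Z + g Y (cn X Z))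
    -- θ(X,Y,Z) := g(T(X,Y),Z) is totally skew-symmetric:
    (hskew₁ : ∀ X Y Z : L, g (torsion cn X Y) Z = - g (torsion cn Y X) Z)
    (hskew₂ : ∀ X Y Z : L, g (torsion cn X Y) Z = - g (torsion cn X Z) Y)
    -- the 3-form θ is parallel: ∇̄θ = 0
    (hpar : ∀ X Y Z W : L,
      act X (g (torsion cn Y Z) W)
        = g (torsion cn (cn X Y) Z) W + g (torsion cn Y (cn X Z)) W
          + g (torsion cn Y Z) (cn X W))
    (X Y Z W : L) :
    g (curvT cn X Y Z) W = g (curvT cn Z W X) Y := by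
  have lsk : ∀ u v : L, ⁅u, v⁆ = -⁅v, u⁆ := fun u v => by rw [← lie_skew u v]
  have tskew : ∀ a b : L, torsion cn b a = - torsion cn a b := by
    intro a b
    simp only [torsion, lsk b a]
    abel
  -- inner product of two torsions: symmetries
  have pSw : ∀ a b c d : L,
      g (torsion cn a b) (torsion cn c d) = g (torsion cn c d) (torsion cn a b) :=
    fun a b c d => hgsym _ _
  have pA1 : ∀ a b c d : L,
      g (torsion cn a b) (torsion cn c d) = -(g (torsion cn b a) (torsion cn c d)) := by
    intro a b c d
    rw [tskew a b, map_neg, LinearMap.neg_apply, neg_neg]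
  have pA2 : ∀ a b c d : L,
      g (torsion cn a b) (torsion cn c d) = -(g (torsion cn a b) (torsion cn d c)) := by
    intro a b c d
    rw [tskew c d, map_neg, neg_neg]
  -- cyclic symmetry of θ
  have thcyc : ∀ u v w : L, g (torsion cn u v) w = g (torsion cn v w) u := by
    intro u v w
    rw [hskew₁ u v w, hskew₂ v u w, neg_neg]
  have sform : ∀ a b c d : L,
      g (torsion cn (torsion cn a b) c) d = g (torsion cn a b) (torsion cn c d) := by
    intro a b c d
    rw [thcyc (torsion cn a b) c d, hgsym]
  -- parallel torsion, scalar form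
  have dt : ∀ a b c d : L,
      g (cn a (torsion cn b c)) d
        = g (torsion cn (cn a b) c) d + g (torsion cn b (cn a c)) d := by
    intro a b c d
    linear_combination hpar a b c d - hmetric a (torsion cn b c) d
  -- vector first Bianchi identity
  have bvec : ∀ a b c : L, curvT cn a b c + curvT cn b c a + curvT cn c a b =
      (cn a (torsion cn b c) - torsion cn (cn a b) c - torsion cn b (cn a c))
    + (cn b (torsion cn c a) - torsion cn (cn b c) a - torsion cn c (cn b a))
    + (cn c (torsion cn a b) - torsion cn (cn c a) b - torsion cn a (cn c b))
    + torsion cn (torsion cn a b) c + torsion cn (torsion cn b c) a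
    + torsion cn (torsion cn c a) b := by
    intro a b c
    have hj : (⁅c, ⁅a, b⁆⁆ : L) = ⁅b, ⁅a, c⁆⁆ - ⁅a, ⁅b, c⁆⁆ := by
      rw [lsk c ⁅a, b⁆, lie_lie]; abel
    simp only [curvT, torsion, map_sub, map_add, LinearMap.sub_apply, LinearMap.add_apply,
      lie_sub, sub_lie, lie_lie]
    rw [lsk ((cn b) a) c, lsk ((cn c) b) a, lsk ((cn a) c) b, lsk c a, lsk b a, lsk c b]
    simp only [map_neg, LinearMap.neg_apply, lie_neg, neg_lie, neg_neg]
    rw [hj]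
    abel
  -- scalar Bianchi identity
  have bs : ∀ a b c d : L,
      g (curvT cn a b c) d + g (curvT cn b c a) d + g (curvT cn c a b) d
        = g (torsion cn (torsion cn a b) c) d + g (torsion cn (torsion cn b c) a) d
          + g (torsion cn (torsion cn c a) b) d := by
    intro a b c d
    have h2 := congrArg (fun v : L => g v d) (bvec a b c)
    simp only [map_add, map_sub, LinearMap.add_apply, LinearMap.sub_apply] at h2
    linear_combination h2 + dt a b c d + dt b c a d + dt c a b d
  -- diagonal vanishing, from metric compatibility
  have keylemma : ∀ a b c : L, g (curvT cn a b c) c = 0 := by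
    intro a b c
    have h1 : act b (g c c) = g (cn b c + cn b c) c := by
      rw [hmetric b c c, map_add, LinearMap.add_apply, hgsym c (cn b c)]
    have h2 : act a (g c c) = g (cn a c + cn a c) c := by
      rw [hmetric a c c, map_add, LinearMap.add_apply, hgsym c (cn a c)]
    have h3 : act a (act b (g c c))
        = g (cn a (cn b c + cn b c)) c + g (cn b c + cn b c) (cn a c) := by
      rw [h1, hmetric]
    have h4 : act b (act a (g c c))
        = g (cn b (cn a c + cn a c)) c + g (cn a c + cn a c) (cn b c) := by
      rw [h2, hmetric]
    have h5 : act ⁅a, b⁆ (g c c) = g (cn ⁅a, b⁆ c) c + g c (cn ⁅a, b⁆ c) := hmetric _ _ _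
    have h6 := hact a b (g c c)
    have hcomb : g (cn ⁅a, b⁆ c) c + g c (cn ⁅a, b⁆ c)
        = (g (cn a (cn b c + cn b c)) c + g (cn b c + cn b c) (cn a c))
          - (g (cn b (cn a c + cn a c)) c + g (cn a c + cn a c) (cn b c)) := by
      rw [← h3, ← h4, ← h5, h6]
    simp only [map_add, LinearMap.add_apply] at hcomb
    apply curv_half_aux (A := A)
    simp only [curvT, map_sub, map_add, LinearMap.sub_apply, LinearMap.add_apply]
    linear_combination -hcomb + hgsym c (cn ⁅a, b⁆ c) - 2 * hgsym (cn b c) (cn a c)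
  -- skew symmetry in the last two arguments
  have skewL : ∀ a b c d : L, g (curvT cn a b c) d = - g (curvT cn a b d) c := by
    intro a b c d
    have h := keylemma a b (c + d)
    have hc : curvT cn a b (c + d) = curvT cn a b c + curvT cn a b d := by
      simp only [curvT, map_add]
      abel
    rw [hc] at h
    simp only [map_add, LinearMap.add_apply] at h
    linear_combination h - keylemma a b c - keylemma a b d
  -- skew symmetry in the first two arguments
  have skewF : ∀ a b c d : L, g (curvT cn a b c) d = - g (curvT cn b a c) d := by
    intro a b c d
    have hb : curvT cn b a c = - curvT cn a b c := by
      simp only [curvT, lsk b a, map_neg, LinearMap.neg_apply]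
      abel
    rw [hb, map_neg, LinearMap.neg_apply, neg_neg]
  -- pair symmetry, doubled
  have pair2 : ∀ a b c d : L,
      g (curvT cn b c a) d + g (curvT cn b c a) d
        = g (curvT cn a d b) c + g (curvT cn a d b) c := by
    intro a b c d
    linear_combination (bs a b c d) - (bs b c d a) - (bs c d a b) + (bs d a b c)
      - skewL a b c d + sform a b c d - pA1 a b c d + pA2 a b c d + pSw a b c d
      + sform a b d c - skewF a c b d + skewL a c b d + pA1 a c b d - pA2 a c b d
      - sform a c d b - skewF a d b c - skewL a d b c + pA1 a d b c + pA2 a d b c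
      - 2 * pSw a d b c + skewF a d c b - pA1 a d c b + pSw b a c d + skewL b c a d
      + sform b c a d - pA2 b c a d - sform b c d a - skewL b d a c + sform b d a c
      + pA2 b d a c + skewF b d c a - pA1 b d c a + sform c a b d + skewL c d a b
      - sform c d a b - sform c d b a + sform d a b c - sform d a c b - sform d b c a
  exact curv_half_aux (pair2 Z X Y W)
end

section
/- Key third-order identity: setting Z = Y and adding the two Ricci identities gives ∇³_{X,Y,Y}ψ − ∇³_{Y,Y,X}ψ = 2 R^∇_{X,Y}∇_Yψ − ∇_{R̄_{X,Y}Y}ψ − (∇_Y R^∇)_{Y,X}ψ − ∇²_{T(X,Y),Y}ψ − ∇²_{Y,T(X,Y)}ψ − ∇_{(∇̄_Y T)(X,Y)}ψ. -/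
/- Abstract model: `L` plays the role of the Lie algebra of vector fields Γ(TM) on a
   smooth manifold M, `S` the space of sections Γ(VM) of a vector bundle VM, `cn` an
   auxiliary connection ∇̄ on TM (with torsion) and `D` a connection ∇ on VM. -/

variable {L : Type*} [LieRing L] [LieAlgebra ℝ L]

/-- Covariant derivative (∇̄_X T)(Y,Z) of the torsion. -/
def covTorsion (cn : L →ₗ[ℝ] L →ₗ[ℝ] L) (X Y Z : L) : L :=
  cn X (torsion cn Y Z) - torsion cn (cn X Y) Z - torsion cn Y (cn X Z)

variable {S : Type*} [AddCommGroup S] [Module ℝ S]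

/-- Curvature R^∇_{X,Y} = ∇_X∇_Y − ∇_Y∇_X − ∇_{[X,Y]} of the connection ∇ on VM. -/
def curvV (D : L →ₗ[ℝ] Module.End ℝ S) (X Y : L) : Module.End ℝ S :=
  D X * D Y - D Y * D X - D ⁅X, Y⁆

/-- Second iterated covariant derivative ∇²_{X,Y} = ∇_X∇_Y − ∇_{∇̄_X Y}. -/
def D2 (cn : L →ₗ[ℝ] L →ₗ[ℝ] L) (D : L →ₗ[ℝ] Module.End ℝ S) (X Y : L) :
    Module.End ℝ S :=
  D X * D Y - D (cn X Y)

/-- Third iterated covariant derivative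
∇³_{X,Y,Z} = ∇_X ∘ ∇²_{Y,Z} − ∇²_{∇̄_X Y,Z} − ∇²_{Y,∇̄_X Z}. -/
def D3 (cn : L →ₗ[ℝ] L →ₗ[ℝ] L) (D : L →ₗ[ℝ] Module.End ℝ S) (X Y Z : L) :
    Module.End ℝ S :=
  D X * D2 cn D Y Z - D2 cn D (cn X Y) Z - D2 cn D Y (cn X Z)

/-- Covariant derivative of the curvature,
(∇_Y R^∇)_{X,Z} = ∇_Y ∘ R^∇_{X,Z} − R^∇_{∇̄_Y X,Z} − R^∇_{X,∇̄_Y Z} − R^∇_{X,Z} ∘ ∇_Y. -/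
def covCurvV (cn : L →ₗ[ℝ] L →ₗ[ℝ] L) (D : L →ₗ[ℝ] Module.End ℝ S) (Y X Z : L) :
    Module.End ℝ S :=
  D Y * curvV D X Z - curvV D (cn Y X) Z - curvV D X (cn Y Z) - curvV D X Z * D Y

/-- key third-order identity: setting Z = Y and adding the two
Ricci identities gives
∇³_{X,Y,Y}ψ − ∇³_{Y,Y,X}ψ = 2 R^∇_{X,Y}∇_Yψ − ∇_{R̄_{X,Y}Y}ψ − (∇_Y R^∇)_{Y,X}ψ
  − ∇²_{T(X,Y),Y}ψ − ∇²_{Y,T(X,Y)}ψ − ∇_{(∇̄_Y T)(X,Y)}ψ. -/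
theorem key_third_order_identity
    (cn : L →ₗ[ℝ] L →ₗ[ℝ] L) (D : L →ₗ[ℝ] Module.End ℝ S) (X Y : L) (ψ : S) :
    D3 cn D X Y Y ψ - D3 cn D Y Y X ψ
      = (2 : ℝ) • curvV D X Y (D Y ψ) - D (curvT cn X Y Y) ψ
        - covCurvV cn D Y Y X ψ
        - D2 cn D (torsion cn X Y) Y ψ - D2 cn D Y (torsion cn X Y) ψ
        - D (covTorsion cn Y X Y) ψ := by
  have hsk : (⁅Y, X⁆ : L) = -⁅X, Y⁆ := by rw [← lie_skew]
  have h1 : (⁅Y, cn Y X⁆ : L) = -⁅cn Y X, Y⁆ := by rw [← lie_skew]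
  have h2 : (⁅cn Y Y, X⁆ : L) = -⁅X, cn Y Y⁆ := by rw [← lie_skew]
  simp only [D3, D2, curvV, curvT, covCurvV, torsion, covTorsion, hsk, h1, h2, lie_self,
    map_sub, map_add, map_neg, map_zero, LinearMap.sub_apply, LinearMap.add_apply,
    LinearMap.neg_apply, LinearMap.zero_apply, Module.End.mul_apply, LinearMap.smul_apply,
    smul_sub]
  module
end

section
/- Second Bianchi consequence for the exterior derivative: if R is a tensor satisfying both Bianchi identities of the Levi-Civita curvature (first Bianchi in the last three slots and second Bianchi for its covariant derivative ∇R), then Σ_{λ,μ} E_λ^♭ ∧ E_μ^♭ ∧ (∇_{E_λ}R)_{E_μ,X} ω = 0 for every p-form ω and every vector X, where (∇_{E_λ}R)_{E_μ,X} acts on forms via the standard so-action. Consequently the error term σ_∧(q(∇R) − δR⋆) for the exterior derivative vanishes and the standard Laplace operator commutes with d. -/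
open scoped RealInnerProductSpace

/- Linear-algebra model (pointwise): `V` a Euclidean vector space, `F` the space of
   forms Λ^•V*, `wdg X` the operator "X^♭ ∧" (so wedges anticommute), and
   `S X Y Z` the operator on forms by which (∇_X R)_{Y,Z} acts via the standard
   so-action.  `S` is alternating in its last two slots, satisfies the second Bianchi
   identity, and each ∇_X R is an algebraic curvature tensor, so it satisfies the
   first Bianchi identity in the operator form
   Σ_{λμ} e_λ^♭ ∧ e_μ^♭ ∧ (∇_X R)_{e_λ,e_μ} = 0. -/

/-- second Bianchi consequence for the exterior derivative: if R
satisfies both Bianchi identities of the Levi-Civita curvature, then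
Σ_{λ,μ} E_λ^♭ ∧ E_μ^♭ ∧ (∇_{E_λ}R)_{E_μ,X} ω = 0 for every form ω and every vector X
— hence the error term for the exterior derivative vanishes and the standard
Laplace operator commutes with d. -/
theorem second_bianchi_exterior_derivative_error_vanishes
    {V F : Type*}
    [NormedAddCommGroup V] [InnerProductSpace ℝ V] [FiniteDimensional ℝ V]
    [AddCommGroup F] [Module ℝ F]
    {ι : Type*} [Fintype ι] (e : OrthonormalBasis ι ℝ V)
    (wdg : V →ₗ[ℝ] Module.End ℝ F)
    (hanti : ∀ X Y : V, wdg X * wdg Y = - (wdg Y * wdg X))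
    (S : V →ₗ[ℝ] V →ₗ[ℝ] V →ₗ[ℝ] Module.End ℝ F)
    (haltS : ∀ X Y Z : V, S X Y Z = - S X Z Y)
    (hSecondBianchi : ∀ X Y Z : V, S X Y Z + S Y Z X + S Z X Y = 0)
    (hFirstBianchi : ∀ X : V,
      (∑ l, ∑ m, wdg (e l) * wdg (e m) * S X (e l) (e m)) = 0)
    (X : V) (ω : F) :
    (∑ l, ∑ m, wdg (e l) * wdg (e m) * S (e l) (e m) X) ω = 0 := by
  suffices h : (∑ l, ∑ m, wdg (e l) * wdg (e m) * S (e l) (e m) X) = 0 by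
    rw [h]; rfl
  set A := ∑ l, ∑ m, wdg (e l) * wdg (e m) * S (e l) (e m) X with hA
  have hswap : A = -A := by
    have step1 : ∀ l m : ι, S (e l) (e m) X =
        - S (e m) X (e l) - S X (e l) (e m) := by
      intro l m
      have h := hSecondBianchi (e l) (e m) X
      rw [add_assoc] at h
      rw [eq_neg_of_add_eq_zero_left h, neg_add, sub_eq_add_neg]
    have step2 : ∀ l m : ι, S (e m) X (e l) = - S (e m) (e l) X := by
      intro l m; exact haltS (e m) X (e l)
    calc A = ∑ l, ∑ m, (wdg (e l) * wdg (e m) * S (e m) (e l) X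
              - wdg (e l) * wdg (e m) * S X (e l) (e m)) := by
            refine Finset.sum_congr rfl fun l _ => Finset.sum_congr rfl fun m _ => ?_
            rw [step1 l m, step2 l m, neg_neg, mul_sub]
      _ = (∑ l, ∑ m, wdg (e l) * wdg (e m) * S (e m) (e l) X)
            - (∑ l, ∑ m, wdg (e l) * wdg (e m) * S X (e l) (e m)) := by
            rw [← Finset.sum_sub_distrib]
            refine Finset.sum_congr rfl fun l _ => ?_
            rw [← Finset.sum_sub_distrib]
      _ = ∑ l, ∑ m, wdg (e l) * wdg (e m) * S (e m) (e l) X := by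
            rw [hFirstBianchi X, sub_zero]
      _ = ∑ m, ∑ l, wdg (e m) * wdg (e l) * S (e l) (e m) X := by
            rw [Finset.sum_comm]
      _ = ∑ m, ∑ l, -(wdg (e l) * wdg (e m) * S (e l) (e m) X) := by
            refine Finset.sum_congr rfl fun m _ => Finset.sum_congr rfl fun l _ => ?_
            rw [hanti (e m) (e l), neg_mul]
      _ = -A := by rw [hA]; rw [Finset.sum_comm (s := Finset.univ)]; simp [Finset.sum_neg_distrib]
  have h2 : (2 : ℝ) • A = 0 := by
    rw [two_smul]; nth_rewrite 1 [hswap]; simp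
  have : A = (2:ℝ)⁻¹ • ((2:ℝ) • A) := by rw [smul_smul]; norm_num
  rw [this, h2, smul_zero]
end
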